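/- Let U = {1, u, v} where u, v are unit-magnitude complex numbers with u ≠ ±1, v ≠ ±1, u ≠ ±v, and let x = I_{u,v}(0,1). Then R(U) = ℤ + xℤ = { m + n·x : m, n ∈ ℤ }; in particular R(U) is a lattice in ℂ. -/

import Mathlib

open Complex

/-- The bracket `[x,y] = x * conj y - y * conj x`. -/
noncomputable def brkt (x y : ℂ) : ℂ := x * (starRingEnd ℂ) y - y * (starRingEnd ℂ) x

/-- `lineInt α β p q` is the intersection point `I_{α,β}(p,q)` of the line through `p`
with direction `α` and the line through `q` with direction `β` (for unit `α ≠ ±β`),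
given by the formula of Buhler et al. -/
noncomputable def lineInt (α β p q : ℂ) : ℂ :=
  brkt α p / brkt α β * β + brkt β q / brkt β α * α

/-- The sets `S n` in the inductive construction. -/
def stepSet (U : Set ℂ) : ℕ → Set ℂ
  | 0 => {0, 1}
  | n + 1 => {z | ∃ α ∈ U, ∃ β ∈ U, α ≠ β ∧ α ≠ -β ∧
      ∃ p ∈ stepSet U n, ∃ q ∈ stepSet U n, z = lineInt α β p q}

/-- `RU U = ⋃ n, S n`. -/
def RU (U : Set ℂ) : Set ℂ := ⋃ n, stepSet U n

/-- Elementary monomials of `U`. -/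
def IsElem (U : Set ℂ) (z : ℂ) : Prop :=
  ∃ α ∈ U, ∃ β ∈ U, α ≠ β ∧ α ≠ -β ∧ z = lineInt α β 0 1

/-- Monomials of `U`, defined inductively. -/
inductive IsMonomial (U : Set ℂ) : ℂ → Prop
  | elementary (α β : ℂ) (hα : α ∈ U) (hβ : β ∈ U) (h1 : α ≠ β) (h2 : α ≠ -β) :
      IsMonomial U (lineInt α β 0 1)
  | step (α β m : ℂ) (hα : α ∈ U) (hβ : β ∈ U) (h1 : α ≠ β) (h2 : α ≠ -β)
      (hm : IsMonomial U m) : IsMonomial U (lineInt α β 0 m)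

/-- `P`: the real numbers arising as length-two monomials `I_{γ,δ}(0,z)` on the real axis. -/
def projSet (U : Set ℂ) : Set ℝ :=
  {r | ∃ γ ∈ U, ∃ δ ∈ U, γ ≠ δ ∧ γ ≠ -δ ∧ ∃ z, IsElem U z ∧ (r : ℂ) = lineInt γ δ 0 z}

/-- `m` is a `ℤ[P]`-linear combination of elementary monomials of `U`. -/
def IsZPComb (U : Set ℂ) (m : ℂ) : Prop :=
  ∃ (n : ℕ) (c : Fin n → ℝ) (z : Fin n → ℂ),
    (∀ i, c i ∈ Subring.closure (projSet U)) ∧ (∀ i, IsElem U (z i)) ∧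
    m = ∑ i, (c i : ℂ) * z i

/-!
With `x = I_{u,v}(0,1)` we have `x = t u = 1 + s v` for real `t, s`, so the lattice point
`m + n x` lies on the horizontal line of level `n`, on the `u`-line of level `m` and on the
`v`-line of level `m + n`. Intersecting lines through lattice points therefore gives lattice
points, which is the inclusion `R(U) ⊆ ℤ + xℤ`. Conversely, in coordinates the three kinds of
intersection act as the moves `(m, n), (m', n') ↦ (m', n), (m' + n' - n, n), (m, m' + n' - m)`,
and these generate all of `ℤ²` from `(0, 0)` and `(1, 0)`.
-/

lemma brkt_antisymm (x y : ℂ) : brkt y x = -brkt x y := by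
  simp only [brkt]; ring

lemma conj_brkt (x y : ℂ) : starRingEnd ℂ (brkt x y) = -brkt x y := by
  simp only [brkt, map_sub, map_mul, conj_conj]; ring

lemma exists_real_mul_of_brkt_eq_zero {α w : ℂ} (hα : ‖α‖ = 1) (h : brkt α w = 0) :
    ∃ s : ℝ, w = s * α := by
  have hαα : starRingEnd ℂ α * α = 1 := by
    rw [mul_comm, mul_conj, normSq_eq_norm_sq, hα]; norm_num
  have hreal : starRingEnd ℂ (w * starRingEnd ℂ α) = w * starRingEnd ℂ α := by
    simp only [brkt] at h
    simp only [map_mul, conj_conj]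
    linear_combination h
  refine ⟨(w * starRingEnd ℂ α).re, ?_⟩
  rw [conj_eq_iff_re.mp hreal, mul_assoc, hαα, mul_one]

lemma brkt_ne_zero {α β : ℂ} (hα : ‖α‖ = 1) (hβ : ‖β‖ = 1) (h : α ≠ β) (h' : α ≠ -β) :
    brkt α β ≠ 0 := by
  intro h0
  obtain ⟨s, rfl⟩ := exists_real_mul_of_brkt_eq_zero hα h0
  rw [norm_mul, hα, mul_one, norm_real, Real.norm_eq_abs] at hβ
  rcases abs_eq zero_le_one |>.mp hβ with rfl | rfl
  · exact h (by simp)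
  · exact h' (by simp)

lemma lineInt_comm (α β p q : ℂ) : lineInt β α q p = lineInt α β p q :=
  add_comm _ _

lemma lineInt_eq {α β p q z : ℂ} (hD : brkt α β ≠ 0) (t s : ℝ)
    (hp : z = p + t * α) (hq : z = q + s * β) : lineInt α β p q = z := by
  have hp' : brkt α p = brkt α z := by
    rw [hp]; simp only [brkt, map_add, map_mul, conj_ofReal]; ring
  have hq' : brkt β q = brkt β z := by
    rw [hq]; simp only [brkt, map_add, map_mul, conj_ofReal]; ring
  rw [lineInt, hp', hq', brkt_antisymm α β, div_neg, ← sub_eq_zero]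
  field_simp
  simp only [brkt]; ring

lemma lineInt_self {α β : ℂ} (hD : brkt α β ≠ 0) (z : ℂ) : lineInt α β z z = z :=
  lineInt_eq hD 0 0 (by simp) (by simp)

lemma exists_lineInt_eq_add_real_mul {α β : ℂ} (hα : ‖α‖ = 1) (hD : brkt α β ≠ 0)
    (p q : ℂ) : ∃ t : ℝ, lineInt α β p q = p + t * α := by
  set c := brkt α p / brkt α β
  set d := brkt β q / brkt β α
  have hc : starRingEnd ℂ c = c := by
    simp only [c, map_div₀, conj_brkt, neg_div_neg_eq]
  have hd : starRingEnd ℂ d = d := by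
    simp only [d, map_div₀, conj_brkt, neg_div_neg_eq]
  have hcD : c * brkt α β = brkt α p := div_mul_cancel₀ _ hD
  suffices brkt α (lineInt α β p q - p) = 0 by
    obtain ⟨t, ht⟩ := exists_real_mul_of_brkt_eq_zero hα this
    exact ⟨t, by rw [← ht]; ring⟩
  rw [show lineInt α β p q = c * β + d * α from rfl]
  simp only [brkt, map_sub, map_add, map_mul, hc, hd] at hcD ⊢
  linear_combination hcD

section Construction

variable {U : Set ℂ}

lemma RU_subset_of_closed {L : Set ℂ} (h0 : 0 ∈ L) (h1 : 1 ∈ L)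
    (hL : ∀ α ∈ U, ∀ β ∈ U, α ≠ β → α ≠ -β → ∀ p ∈ L, ∀ q ∈ L, lineInt α β p q ∈ L) :
    RU U ⊆ L := by
  refine Set.iUnion_subset fun n => ?_
  induction n with
  | zero => rintro z (rfl | rfl) <;> assumption
  | succ n ih =>
    rintro z ⟨α, hα, β, hβ, hne, hne', p, hp, q, hq, rfl⟩
    exact hL α hα β hβ hne hne' p (ih hp) q (ih hq)

lemma zero_mem_RU : (0 : ℂ) ∈ RU U := Set.mem_iUnion.mpr ⟨0, by simp [stepSet]⟩

lemma one_mem_RU : (1 : ℂ) ∈ RU U := Set.mem_iUnion.mpr ⟨0, by simp [stepSet]⟩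

lemma stepSet_monotone {α β : ℂ} (hα : α ∈ U) (hβ : β ∈ U) (hne : α ≠ β) (hne' : α ≠ -β)
    (hD : brkt α β ≠ 0) : Monotone (stepSet U) :=
  monotone_nat_of_le_succ fun _ z hz =>
    ⟨α, hα, β, hβ, hne, hne', z, hz, z, hz, (lineInt_self hD z).symm⟩

lemma lineInt_mem_RU (hmono : Monotone (stepSet U)) {α β p q : ℂ} (hα : α ∈ U) (hβ : β ∈ U)
    (hne : α ≠ β) (hne' : α ≠ -β) (hp : p ∈ RU U) (hq : q ∈ RU U) :
    lineInt α β p q ∈ RU U := by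
  obtain ⟨a, hp⟩ := Set.mem_iUnion.mp hp
  obtain ⟨b, hq⟩ := Set.mem_iUnion.mp hq
  exact Set.mem_iUnion.mpr ⟨max a b + 1, α, hα, β, hβ, hne, hne',
    p, hmono (le_max_left a b) hp, q, hmono (le_max_right a b) hq, rfl⟩

end Construction

lemma forall_of_lattice_moves {P : ℤ → ℤ → Prop} (h00 : P 0 0) (h10 : P 1 0)
    (horiz : ∀ m n m' n', P m n → P m' n' → P m' n)
    (diag : ∀ m n m' n', P m n → P m' n' → P (m' + n' - n) n)
    (vert : ∀ m n m' n', P m n → P m' n' → P m (m' + n' - m)) :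
    ∀ m n, P m n := by
  have h0k : ∀ k : ℕ, P 0 k := by
    intro k
    induction k with
    | zero => exact h00
    | succ k ih => convert vert 0 0 1 k h00 (horiz 0 k 1 0 ih h10) using 2; push_cast; ring
  have hm0 : ∀ m, P m 0 := by
    intro m
    obtain ⟨k, rfl | rfl⟩ : ∃ k : ℕ, m = 1 + k ∨ m = 1 - k := ⟨(m - 1).natAbs, by omega⟩
    · convert diag 0 0 1 k h00 (horiz 0 k 1 0 (h0k k) h10) using 2; ring
    · convert horiz 0 0 (1 - k) k h00 (by convert diag 0 k 1 0 (h0k k) h10 using 2; ring)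
  have h0n : ∀ n, P 0 n := fun n => by convert vert 0 0 n 0 h00 (hm0 n) using 2; ring
  exact fun m n => horiz 0 n m 0 (h0n n) (hm0 m)

def zLattice (x : ℂ) : Set ℂ := {z | ∃ m n : ℤ, z = m + n * x}

section Lattice

variable {u v x : ℂ} {t s : ℝ}

lemma lineInt_one_u_lattice (hD : brkt 1 u ≠ 0) (hxt : x = t * u) (m n m' n' : ℤ) :
    lineInt 1 u (m + n * x) (m' + n' * x) = m' + n * x :=
  lineInt_eq hD (m' - m) ((n - n') * t) (by push_cast [hxt]; ring) (by push_cast [hxt]; ring)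

lemma lineInt_one_v_lattice (hD : brkt 1 v ≠ 0) (hxs : x = 1 + s * v) (m n m' n' : ℤ) :
    lineInt 1 v (m + n * x) (m' + n' * x) = ((m' + n' - n : ℤ) : ℂ) + n * x :=
  lineInt_eq hD (m' + n' - n - m) ((n - n') * s)
    (by push_cast [hxs]; ring) (by push_cast [hxs]; ring)

lemma lineInt_u_v_lattice (hD : brkt u v ≠ 0) (hxt : x = t * u) (hxs : x = 1 + s * v)
    (m n m' n' : ℤ) :
    lineInt u v (m + n * x) (m' + n' * x) = m + ((m' + n' - m : ℤ) : ℂ) * x :=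
  lineInt_eq hD ((m' + n' - m - n) * t) ((m' - m) * s)
    (by push_cast [hxt]; ring) (by push_cast [hxs]; ring)

lemma lineInt_mem_zLattice (hD1u : brkt 1 u ≠ 0) (hD1v : brkt 1 v ≠ 0) (hDuv : brkt u v ≠ 0)
    (hxt : x = t * u) (hxs : x = 1 + s * v) {α β p q : ℂ} (hα : α ∈ ({1, u, v} : Set ℂ))
    (hβ : β ∈ ({1, u, v} : Set ℂ)) (hne : α ≠ β) (hp : p ∈ zLattice x) (hq : q ∈ zLattice x) :
    lineInt α β p q ∈ zLattice x := by
  obtain ⟨m, n, rfl⟩ := hp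
  obtain ⟨m', n', rfl⟩ := hq
  simp only [Set.mem_insert_iff, Set.mem_singleton_iff] at hα hβ
  rcases hα with rfl | rfl | rfl <;> rcases hβ with rfl | rfl | rfl
  · exact absurd rfl hne
  · exact ⟨_, _, lineInt_one_u_lattice hD1u hxt m n m' n'⟩
  · exact ⟨_, _, lineInt_one_v_lattice hD1v hxs m n m' n'⟩
  · exact ⟨_, _, (lineInt_comm _ _ _ _).trans (lineInt_one_u_lattice hD1u hxt m' n' m n)⟩
  · exact absurd rfl hne
  · exact ⟨_, _, lineInt_u_v_lattice hDuv hxt hxs m n m' n'⟩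
  · exact ⟨_, _, (lineInt_comm _ _ _ _).trans (lineInt_one_v_lattice hD1v hxs m' n' m n)⟩
  · exact ⟨_, _, (lineInt_comm _ _ _ _).trans (lineInt_u_v_lattice hDuv hxt hxs m' n' m n)⟩
  · exact absurd rfl hne

lemma zLattice_subset_RU {U : Set ℂ} (h1U : 1 ∈ U) (huU : u ∈ U) (hvU : v ∈ U)
    (h1u : 1 ≠ u) (h1u' : 1 ≠ -u) (h1v : 1 ≠ v) (h1v' : 1 ≠ -v) (huv : u ≠ v) (huv' : u ≠ -v)
    (hD1u : brkt 1 u ≠ 0) (hD1v : brkt 1 v ≠ 0) (hDuv : brkt u v ≠ 0)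
    (hxt : x = t * u) (hxs : x = 1 + s * v) : zLattice x ⊆ RU U := by
  have hmono := stepSet_monotone h1U huU h1u h1u' hD1u
  rintro _ ⟨m, n, rfl⟩
  refine forall_of_lattice_moves (P := fun m n : ℤ => (m : ℂ) + n * x ∈ RU U)
    (by simpa using zero_mem_RU) (by simpa using one_mem_RU) ?_ ?_ ?_ m n
  · intro m n m' n' hp hq
    rw [← lineInt_one_u_lattice hD1u hxt m n m' n']
    exact lineInt_mem_RU hmono h1U huU h1u h1u' hp hq
  · intro m n m' n' hp hq
    rw [← lineInt_one_v_lattice hD1v hxs m n m' n']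
    exact lineInt_mem_RU hmono h1U hvU h1v h1v' hp hq
  · intro m n m' n' hp hq
    rw [← lineInt_u_v_lattice hDuv hxt hxs m n m' n']
    exact lineInt_mem_RU hmono huU hvU huv huv' hp hq

end Lattice

/-- for `U = {1, u, v}` with `1, u, v` pairwise non-±-equal and
`x = I_{u,v}(0,1)`, we have `R(U) = ℤ + xℤ`. -/
theorem stmt5 (u v : ℂ) (hu : ‖u‖ = 1) (hv : ‖v‖ = 1)
    (hu1 : u ≠ 1) (hu1' : u ≠ -1) (hv1 : v ≠ 1) (hv1' : v ≠ -1)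
    (huv : u ≠ v) (huv' : u ≠ -v) :
    RU {1, u, v} = {z | ∃ m n : ℤ, z = (m : ℂ) + (n : ℂ) * lineInt u v 0 1} := by
  have h1u : (1 : ℂ) ≠ -u := fun h => hu1' (neg_eq_iff_eq_neg.mp h.symm)
  have h1v : (1 : ℂ) ≠ -v := fun h => hv1' (neg_eq_iff_eq_neg.mp h.symm)
  have hD1u : brkt 1 u ≠ 0 := brkt_ne_zero norm_one hu hu1.symm h1u
  have hD1v : brkt 1 v ≠ 0 := brkt_ne_zero norm_one hv hv1.symm h1v
  have hDuv : brkt u v ≠ 0 := brkt_ne_zero hu hv huv huv'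
  obtain ⟨t, hxt⟩ := exists_lineInt_eq_add_real_mul hu hDuv 0 1
  obtain ⟨s, hxs⟩ := exists_lineInt_eq_add_real_mul hv (by rwa [brkt_antisymm, neg_ne_zero]) 1 0
  rw [zero_add] at hxt
  rw [lineInt_comm] at hxs
  exact subset_antisymm
    (RU_subset_of_closed ⟨0, 0, by simp⟩ ⟨1, 0, by simp⟩ fun α hα β hβ hne _ p hp q hq =>
      lineInt_mem_zLattice hD1u hD1v hDuv hxt hxs hα hβ hne hp hq)
    (zLattice_subset_RU (by simp) (by simp) (by simp) hu1.symm h1u hv1.symm h1v huv huv'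
      hD1u hD1v hDuv hxt hxs)
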